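/- Let k ≥ 2 be an integer, ψ a bounded complexity measure and T ∈ M_k^∞ ∖ M_k^{∞c}. Then ψ^a(T) = max{M_ψ(T,δ̄) : δ̄ ∈ Δ(T)}. -/

import Mathlib

open Classical

noncomputable section

/-- A decision table with many-valued decisions over `E_k = {0,…,k-1}`.
Columns are labeled with attributes `f_i` identified with their indices `i : ℕ`;
a row is a function `ℕ → ℕ` supported on the attribute set, with values `< k`;
each row is labeled with a nonempty finite set of decisions. -/
structure Table (k : ℕ) where
  attrs : Finset ℕ
  rows : Finset (ℕ → ℕ)
  dec : (ℕ → ℕ) → Finset ℕ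
  rows_mem : ∀ r ∈ rows, (∀ i ∈ attrs, r i < k) ∧ (∀ i ∉ attrs, r i = 0)
  dec_nonempty : ∀ r ∈ rows, (dec r).Nonempty

namespace Table

variable {k : ℕ}

/-- a row satisfies a word (a list of (attribute, value) pairs) -/
def rowSat (r : ℕ → ℕ) (α : List (ℕ × ℕ)) : Prop := ∀ q ∈ α, r q.1 = q.2

/-- the word belongs to `Ω_k(T)` -/
def wordOk (T : Table k) (α : List (ℕ × ℕ)) : Prop := ∀ q ∈ α, q.1 ∈ T.attrs ∧ q.2 < k

/-- the subtable `Tα` -/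
def applyWord (T : Table k) (α : List (ℕ × ℕ)) : Table k where
  attrs := T.attrs
  rows := T.rows.filter (fun r => rowSat r α)
  dec := T.dec
  rows_mem := fun r hr => T.rows_mem r (Finset.mem_filter.mp hr).1
  dec_nonempty := fun r hr => T.dec_nonempty r (Finset.mem_filter.mp hr).1

/-- `T ∈ M_k^{∞c}` : the table has a common decision -/
def hasCommon (T : Table k) : Prop := ∃ d : ℕ, ∀ r ∈ T.rows, d ∈ T.dec r

/-- `N(T)` : number of rows -/
def NT (T : Table k) : ℕ := T.rows.card

/-- `W(T)` : number of columns (`0` for the empty table `Λ`) -/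
def WT (T : Table k) : ℕ := if T.rows = ∅ then 0 else T.attrs.card

/-- the closure `[T]` of `T` under removal of columns and changing of decisions:
`Q = J(ν, I(D,T))` for some `D ⊆ At(T)` and some `ν` (the decision labeling of `Q`
on its rows is arbitrary, i.e. is the arbitrary `ν` with nonempty finite values). -/
def closureT (T : Table k) : Set (Table k) :=
  {Q | ∃ D : Finset ℕ, D ⊆ T.attrs ∧ Q.attrs = T.attrs \ D ∧
      Q.rows = T.rows.image (fun r i => if i ∈ T.attrs \ D then r i else 0)}

end Table

/-- a closed class: `[A] = A` -/
def IsClosedClass {k : ℕ} (A : Set (Table k)) : Prop := ∀ T ∈ A, Table.closureT T ⊆ A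

/-- a nontrivial class: contains nonempty tables -/
def NontrivialClass {k : ℕ} (A : Set (Table k)) : Prop := ∃ T ∈ A, T.rows.Nonempty

/-- the part of a `k`-decision tree below one edge leaving the root -/
inductive DTree (k : ℕ) : Type
  | leaf (d : ℕ) : DTree k
  | node (a : ℕ) (n : ℕ) (lab : Fin (n + 1) → ℕ) (ch : Fin (n + 1) → DTree k) : DTree k

namespace DTree

variable {k : ℕ}

/-- the set of pairs (π(τ), terminal decision) over complete paths τ -/
def paths : DTree k → Set (List (ℕ × ℕ) × ℕ)
  | leaf d => {([], d)}
  | node a _ lab ch =>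
      ⋃ i, (fun p : List (ℕ × ℕ) × ℕ => ((a, lab i) :: p.1, p.2)) '' paths (ch i)

/-- edge labels belong to `E_k` -/
def wf : DTree k → Prop
  | leaf _ => True
  | node _ _ lab ch => (∀ i, lab i < k) ∧ ∀ i, wf (ch i)

/-- edges leaving any node are labeled with pairwise different numbers -/
def det : DTree k → Prop
  | leaf _ => True
  | node _ _ lab ch => Function.Injective lab ∧ ∀ i, det (ch i)

/-- the set of attributes attached to nodes -/
def attrs : DTree k → Finset ℕ
  | leaf _ => ∅
  | node a _ _ ch => insert a (Finset.univ.biUnion fun i => attrs (ch i))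

end DTree

/-- a `k`-decision tree: an unlabeled root with `n+1` unlabeled edges leaving it -/
structure KTree (k : ℕ) where
  n : ℕ
  sub : Fin (n + 1) → DTree k

namespace KTree

variable {k : ℕ}

def paths (Γ : KTree k) : Set (List (ℕ × ℕ) × ℕ) := ⋃ i, (Γ.sub i).paths

def wf (Γ : KTree k) : Prop := ∀ i, (Γ.sub i).wf

def attrs (Γ : KTree k) : Finset ℕ := Finset.univ.biUnion fun i => (Γ.sub i).attrs

end KTree

/-- partially bounded complexity measure on words over `P` -/
structure PBCM where
  toFun : List ℕ → ℕ
  pos : ∀ α, toFun α = 0 ↔ α = []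
  perm : ∀ α β, List.Perm α β → toFun α = toFun β
  mono : ∀ α β, toFun α ≤ toFun (α ++ β)
  subadd : ∀ α β, toFun (α ++ β) ≤ toFun α + toFun β

/-- bounded complexity measure -/
structure BCM extends PBCM where
  bdd : ∀ α, α.length ≤ toFun α

/-- extension of ψ to words over pairs `(f_i, δ)` -/
def PBCM.onWord (ψ : PBCM) (α : List (ℕ × ℕ)) : ℕ := ψ.toFun (α.map Prod.fst)

/-- extension of ψ to finite sets of attributes -/
def PBCM.onSet (ψ : PBCM) (s : Finset ℕ) : ℕ := ψ.toFun (s.sort (· ≤ ·))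

/-- the depth `h` -/
def depthCM : BCM where
  toFun := List.length
  pos := fun α => List.length_eq_zero_iff
  perm := fun _ _ h => h.length_eq
  mono := fun α β => by simp
  subadd := fun α β => by simp
  bdd := fun _ => le_rfl

/-- `ψ(Γ)` : complexity of a decision tree -/
def treeComp {k : ℕ} (ψ : PBCM) (Γ : KTree k) : ℕ :=
  sSup {c | ∃ p ∈ Γ.paths, ψ.onWord p.1 = c}

/-- `Γ` is a nondeterministic decision tree for the (nonempty) table `T` -/
def isNDT {k : ℕ} (T : Table k) (Γ : KTree k) : Prop :=
  T.rows.Nonempty ∧ Γ.wf ∧ Γ.attrs ⊆ T.attrs ∧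
  (∀ r ∈ T.rows, ∃ p ∈ Γ.paths, Table.rowSat r p.1) ∧
  (∀ p ∈ Γ.paths, (T.applyWord p.1).rows = ∅ ∨ ∀ r ∈ (T.applyWord p.1).rows, p.2 ∈ T.dec r)

/-- `Γ` is a deterministic decision tree for `T` -/
def isDDT {k : ℕ} (T : Table k) (Γ : KTree k) : Prop :=
  isNDT T Γ ∧ Γ.n = 0 ∧ ∀ i, (Γ.sub i).det

/-- `ψ^a(T)` -/
def psiA {k : ℕ} (ψ : PBCM) (T : Table k) : ℕ :=
  sInf {c | ∃ Γ : KTree k, isNDT T Γ ∧ treeComp ψ Γ = c}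

/-- `ψ^d(T)` -/
def psiD {k : ℕ} (ψ : PBCM) (T : Table k) : ℕ :=
  sInf {c | ∃ Γ : KTree k, isDDT T Γ ∧ treeComp ψ Γ = c}

/-- `m_ψ(T)` -/
def mpsi {k : ℕ} (ψ : PBCM) (T : Table k) : ℕ :=
  if T.rows = ∅ then 0 else T.attrs.sup fun i => ψ.toFun [i]

/-- `W_ψ(T)` -/
def Wpsi {k : ℕ} (ψ : PBCM) (T : Table k) : ℕ :=
  if T.rows = ∅ then 0 else ψ.onSet T.attrs

/-- a tuple `δ̄ ∈ E_k^{|At(T)|}` -/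
def validTuple {k : ℕ} (T : Table k) (δ : ℕ → ℕ) : Prop :=
  (∀ i ∈ T.attrs, δ i < k) ∧ ∀ i ∉ T.attrs, δ i = 0

/-- `M_ψ(T, δ̄)` -/
def MpsiAt {k : ℕ} (ψ : PBCM) (T : Table k) (δ : ℕ → ℕ) : ℕ :=
  sInf {p | ∃ s : Finset ℕ, s ⊆ T.attrs ∧
    (T.applyWord ((s.sort (· ≤ ·)).map fun i => (i, δ i))).hasCommon ∧ ψ.onSet s = p}

/-- `M_ψ(T)` -/
def Mpsi {k : ℕ} (ψ : PBCM) (T : Table k) : ℕ :=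
  if T.hasCommon then 0 else sSup {p | ∃ δ, validTuple T δ ∧ MpsiAt ψ T δ = p}

/-- `U` is a `(ψ,n)`-cover of `T` -/
def isCover {k : ℕ} (ψ : PBCM) (n : ℕ) (T : Table k) (U : Finset (List (ℕ × ℕ))) : Prop :=
  (∀ α ∈ U, T.wordOk α ∧ ψ.onWord α ≤ n) ∧ ∀ r ∈ T.rows, ∃ α ∈ U, Table.rowSat r α

/-- `U` is an irreducible `(ψ,n)`-cover of `T` -/
def isIrredCover {k : ℕ} (ψ : PBCM) (n : ℕ) (T : Table k) (U : Finset (List (ℕ × ℕ))) : Prop :=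
  isCover ψ n T U ∧ ∀ V ⊂ U, ¬ isCover ψ n T V

/-- `l_ψ(T,n)` : maximum cardinality of an irreducible `(ψ,n)`-cover -/
def lpsi {k : ℕ} (ψ : PBCM) (T : Table k) (n : ℕ) : ℕ :=
  sSup {c | ∃ U, isIrredCover ψ n T U ∧ U.card = c}

/-- the set `{ψ^d(T) : T ∈ A, ψ^a(T) ≤ n}`; `H^∞_{ψ,A}(n)` is defined iff this set
is finite, and is then its maximum -/
def HSet {k : ℕ} (ψ : PBCM) (A : Set (Table k)) (n : ℕ) : Set ℕ :=
  {c | ∃ T ∈ A, psiA ψ T ≤ n ∧ psiD ψ T = c}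

/-- `H^∞_{ψ,A}(n)` (as the max = sSup of the finite set `HSet ψ A n`) -/
def Hfun {k : ℕ} (ψ : PBCM) (A : Set (Table k)) (n : ℕ) : ℕ := sSup (HSet ψ A n)

/-- the set `{l_ψ(T,n) : T ∈ A}` -/
def LSet {k : ℕ} (ψ : PBCM) (A : Set (Table k)) (n : ℕ) : Set ℕ :=
  {c | ∃ T ∈ A, lpsi ψ T n = c}

/-- `L_{ψ,A}(n)` -/
def Lfun {k : ℕ} (ψ : PBCM) (A : Set (Table k)) (n : ℕ) : ℕ := sSup (LSet ψ A n)

/-- `H_D` for an infinite `D ⊆ ℕ` : `H_D(n)` is the largest element of `D` that is `≤ n`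
(and `0` if there is none) -/
def HDfun (D : Set ℕ) (n : ℕ) : ℕ := sSup {d | d ∈ D ∧ d ≤ n}

/-- a complete table from `M_2^∞` -/
def isComplete (Q : Table 2) : Prop := Q.NT = 2 ^ Q.attrs.card

/-- `Z(T)` : maximum number of columns in a complete table from `[T]` (`0` if none) -/
def Zt (T : Table 2) : ℕ := sSup {c | ∃ Q ∈ Table.closureT T, isComplete Q ∧ Q.WT = c}

/-- the set `{Z(T) : T ∈ A_ψ(n)}` -/
def ZSet (ψ : PBCM) (A : Set (Table 2)) (n : ℕ) : Set ℕ :=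
  {c | ∃ T ∈ A, mpsi ψ T ≤ n ∧ Zt T = c}

/-- `Z_{ψ,A}(n)` -/
def Zfun (ψ : PBCM) (A : Set (Table 2)) (n : ℕ) : ℕ := sSup (ZSet ψ A n)

/-- annihilating word for `T` -/
def isAnnih (T : Table 2) (α : List (ℕ × ℕ)) : Prop :=
  T.wordOk α ∧ (∀ p ∈ α, ∀ q ∈ α, p.1 = q.1 → p.2 = q.2) ∧ (T.applyWord α).rows = ∅

/-- irreducible annihilating word for `T` -/
def isIrredAnnih (T : Table 2) (α : List (ℕ × ℕ)) : Prop :=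
  isAnnih T α ∧ ∀ β, β.Sublist α → β ≠ α → ¬ isAnnih T β

/-- `G(T)` : maximum length of an irreducible annihilating word (`0` if none) -/
def Gt (T : Table 2) : ℕ := sSup {c | ∃ α, isIrredAnnih T α ∧ α.length = c}

/-- the set `{G(T) : T ∈ A_ψ(n)}` -/
def GSet (ψ : PBCM) (A : Set (Table 2)) (n : ℕ) : Set ℕ :=
  {c | ∃ T ∈ A, mpsi ψ T ≤ n ∧ Gt T = c}

/-- `G_{ψ,A}(n)` -/
def Gfun (ψ : PBCM) (A : Set (Table 2)) (n : ℕ) : ℕ := sSup (GSet ψ A n)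

/-! ### The tables `T_k` and `T_k^*` built from the triangle-shaped graph `G_k` -/

/-- `m(k) = k(k+1)/2` : number of nodes of `G_k` -/
def mnum (k : ℕ) : ℕ := k * (k + 1) / 2

/-- the layer of node `i` of `G_k` : the unique `L` with `m(L-1) < i ≤ m(L)` -/
def layer (i : ℕ) : ℕ := sInf {L | i ≤ mnum L}

/-- left child `l(i) = i + layer i`; right child `p(i) = i + layer i + 1` -/
def lchild (i : ℕ) : ℕ := i + layer i

def rchild (i : ℕ) : ℕ := i + layer i + 1

/-- the map `ν_k : E_2^{m(k)} → P(ω)` -/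
def nuk (k : ℕ) (δ : ℕ → ℕ) : Finset ℕ :=
  (Finset.range (mnum k + 1)).filter fun i =>
    if i = 0 then δ 1 = 0
    else if layer i = k then δ i = 1
    else δ i = 1 ∧ δ (lchild i) = 0 ∧ δ (rchild i) = 0

/-- all tuples over `E_k` supported on the attribute set `s` -/
def allRows (k : ℕ) (s : Finset ℕ) : Finset (ℕ → ℕ) :=
  (s.pi fun _ => Finset.range k).image fun f i => if h : i ∈ s then f i h else 0

/-- the table with attribute set `s`, all possible rows, and decision labeling `d` -/
def fullTable (k : ℕ) (s : Finset ℕ) (d : (ℕ → ℕ) → Finset ℕ) : Table k where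
  attrs := s
  rows := allRows k s
  dec := fun r => if (d r).Nonempty then d r else {0}
  rows_mem := by
    intro r hr
    simp only [allRows, Finset.mem_image] at hr
    obtain ⟨f, hf, rfl⟩ := hr
    refine ⟨fun i hi => ?_, fun i hi => ?_⟩
    · have h := (Finset.mem_pi.mp hf) i hi
      simp only [Finset.mem_range] at h
      simpa [hi] using h
    · simp [hi]
  dec_nonempty := by
    intro r _
    by_cases h : (d r).Nonempty
    · simp [h]
    · simp [h]

/-- the complete table `T_k` with `m(k)` columns `f_1, …, f_{m(k)}` and `2^{m(k)}` rows,
each row `δ̄` labeled with `ν_k(δ̄)` (which is always nonempty) -/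
def Tk (k : ℕ) : Table 2 := fullTable 2 (Finset.Icc 1 (mnum k)) (nuk k)

/-- the `j`-th node of the complete path of `G_k` determined by the choices `c` -/
def pathNode (c : ℕ → Bool) : ℕ → ℕ
  | 0 => 1
  | j + 1 => if c j then lchild (pathNode c j) else rchild (pathNode c j)

/-- `T_k^*` : the subtable of `T_k` whose rows are exactly the characteristic tuples
of complete paths of `G_k` -/
def Tstar (k : ℕ) : Table 2 where
  attrs := (Tk k).attrs
  rows := (Tk k).rows.filter fun r =>
    ∃ c : ℕ → Bool, ∀ i ∈ Finset.Icc 1 (mnum k), (r i = 1 ↔ ∃ j < k, pathNode c j = i)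
  dec := (Tk k).dec
  rows_mem := fun r hr => (Tk k).rows_mem r (Finset.mem_filter.mp hr).1
  dec_nonempty := fun r hr => (Tk k).dec_nonempty r (Finset.mem_filter.mp hr).1

/-- `r(T)` for a subtable `T` of `T_k^*` : the number of distinct decision sets
`ν_k(δ̄)` among the rows `δ̄` of `T` -/
def rnum (k : ℕ) (T : Table 2) : ℕ := (T.rows.image (nuk k)).card

end

/-!
Both sides are compared path by path. If a complete path `τ` of a nondeterministic decision
tree for `T` passes through the row `δ̄`, the set `s` of attributes read along `τ` is such that
all rows agreeing with `δ̄` on `s` lie in `T(τ)` and so share the decision at the end of `τ`;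
hence `M_ψ(T, δ̄) ≤ ψ(s) ≤ ψ(π(τ))`. Conversely, choosing for each row `δ̄` an optimal set of
attributes together with a common decision of the resulting subtable, and hanging one chain
per row below the root, gives a nondeterministic decision tree whose paths have complexities
`M_ψ(T, δ̄)`.
-/

lemma PBCM.toFun_le_of_subperm (ψ : PBCM) {l l' : List ℕ} (h : l.Subperm l') :
    ψ.toFun l ≤ ψ.toFun l' := by
  obtain ⟨m, hm, hs⟩ := h
  obtain ⟨d, hd⟩ := hs.exists_perm_append
  calc ψ.toFun l = ψ.toFun m := ψ.perm _ _ hm.symm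
    _ ≤ ψ.toFun (m ++ d) := ψ.mono _ _
    _ = ψ.toFun l' := (ψ.perm _ _ hd).symm

lemma PBCM.onSet_toFinset_le (ψ : PBCM) (l : List ℕ) : ψ.onSet l.toFinset ≤ ψ.toFun l :=
  ψ.toFun_le_of_subperm <| (Finset.sort_nodup _ _).subperm fun x hx => by
    simpa using (Finset.mem_sort _).1 hx

namespace DTree

variable {k : ℕ}

lemma paths_finite (t : DTree k) : t.paths.Finite := by
  induction t with
  | leaf d => exact Set.finite_singleton _
  | node a n lab ch ih => exact Set.finite_iUnion fun i => (ih i).image _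

lemma mem_attrs_of_mem_paths {t : DTree k} {p : List (ℕ × ℕ) × ℕ} (hp : p ∈ t.paths)
    {q : ℕ × ℕ} (hq : q ∈ p.1) : q.1 ∈ t.attrs := by
  induction t generalizing p with
  | leaf d =>
      obtain rfl : p = ([], d) := hp
      simp at hq
  | node a n lab ch ih =>
      simp only [paths, Set.mem_iUnion, Set.mem_image] at hp
      obtain ⟨i, p', hp', rfl⟩ := hp
      simp only [attrs, Finset.mem_insert, Finset.mem_biUnion]
      rcases List.mem_cons.1 hq with rfl | hq
      · exact Or.inl rfl
      · exact Or.inr ⟨i, Finset.mem_univ i, ih i hp' hq⟩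

def chain : List (ℕ × ℕ) → ℕ → DTree k
  | [], d => leaf d
  | q :: α, d => node q.1 0 (fun _ => q.2) (fun _ => chain α d)

lemma paths_chain (α : List (ℕ × ℕ)) (d : ℕ) :
    (chain α d : DTree k).paths = {(α, d)} := by
  induction α with
  | nil => rfl
  | cons q α ih => simp [chain, paths, ih]

lemma wf_chain {α : List (ℕ × ℕ)} (h : ∀ q ∈ α, q.2 < k) (d : ℕ) :
    (chain α d : DTree k).wf := by
  induction α with
  | nil => trivial
  | cons q α ih =>
    exact ⟨fun _ => h q List.mem_cons_self, fun _ => ih fun q' hq' => h q' (by simp [hq'])⟩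

lemma attrs_chain (α : List (ℕ × ℕ)) (d : ℕ) :
    (chain α d : DTree k).attrs = (α.map Prod.fst).toFinset := by
  induction α with
  | nil => rfl
  | cons q α ih => simp [chain, attrs, ih]

end DTree

namespace KTree

variable {k : ℕ}

lemma paths_finite (Γ : KTree k) : Γ.paths.Finite :=
  Set.finite_iUnion fun i => (Γ.sub i).paths_finite

lemma mem_attrs_of_mem_paths {Γ : KTree k} {p : List (ℕ × ℕ) × ℕ} (hp : p ∈ Γ.paths)
    {q : ℕ × ℕ} (hq : q ∈ p.1) : q.1 ∈ Γ.attrs := by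
  obtain ⟨i, hpi⟩ := Set.mem_iUnion.1 hp
  exact Finset.mem_biUnion.2 ⟨i, Finset.mem_univ i, DTree.mem_attrs_of_mem_paths hpi hq⟩

lemma onWord_le_treeComp (ψ : PBCM) {Γ : KTree k} {p : List (ℕ × ℕ) × ℕ}
    (hp : p ∈ Γ.paths) : ψ.onWord p.1 ≤ treeComp ψ Γ :=
  le_csSup (Γ.paths_finite.image fun p : List (ℕ × ℕ) × ℕ => ψ.onWord p.1).bddAbove
    ⟨p, hp, rfl⟩

-- For `L ≠ []` the root has exactly `L.length` edges, so the default of `getD` is never used.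
def ofChains (L : List (List (ℕ × ℕ) × ℕ)) : KTree k where
  n := L.length - 1
  sub i := DTree.chain (L.getD i ([], 0)).1 (L.getD i ([], 0)).2

variable {L : List (List (ℕ × ℕ) × ℕ)}

lemma exists_mem_sub_ofChains_eq (hL : L ≠ []) (i : Fin (L.length - 1 + 1)) :
    ∃ p ∈ L, (ofChains L : KTree k).sub i = DTree.chain p.1 p.2 := by
  have hi : (i : ℕ) < L.length := by have := List.length_pos_iff.2 hL; omega
  exact ⟨_, List.getElem_mem hi, by simp [ofChains, List.getElem?_eq_getElem hi]⟩

lemma paths_ofChains (hL : L ≠ []) : (ofChains L : KTree k).paths = {p | p ∈ L} := by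
  ext p
  simp only [paths, Set.mem_iUnion]
  constructor
  · rintro ⟨i, hpi⟩
    obtain ⟨p', hp', hi⟩ := exists_mem_sub_ofChains_eq hL i
    rw [hi, DTree.paths_chain, Set.mem_singleton_iff] at hpi
    rwa [hpi]
  · intro hp
    obtain ⟨j, hj, rfl⟩ := List.getElem_of_mem hp
    refine ⟨⟨j, show j < L.length - 1 + 1 by omega⟩, ?_⟩
    simp [ofChains, DTree.paths_chain, List.getElem?_eq_getElem hj]

end KTree

namespace Table

variable {k : ℕ}

def rowWord (s : Finset ℕ) (r : ℕ → ℕ) : List (ℕ × ℕ) :=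
  (s.sort (· ≤ ·)).map fun i => (i, r i)

lemma rowSat_rowWord_iff {s : Finset ℕ} {r r' : ℕ → ℕ} :
    rowSat r' (rowWord s r) ↔ ∀ i ∈ s, r' i = r i := by
  simp [rowSat, rowWord]

lemma onWord_rowWord (ψ : PBCM) (s : Finset ℕ) (r : ℕ → ℕ) :
    ψ.onWord (rowWord s r) = ψ.onSet s := by
  simp [PBCM.onWord, PBCM.onSet, rowWord, Function.comp_def]

lemma eq_of_mem_rows_of_eqOn_attrs (T : Table k) {r r' : ℕ → ℕ} (hr : r ∈ T.rows)
    (hr' : r' ∈ T.rows) (h : ∀ i ∈ T.attrs, r i = r' i) : r = r' := by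
  funext i
  by_cases hi : i ∈ T.attrs
  · exact h i hi
  · rw [(T.rows_mem r hr).2 i hi, (T.rows_mem r' hr').2 i hi]

lemma hasCommon_applyWord_rowWord_attrs (T : Table k) (r : ℕ → ℕ) :
    (T.applyWord (rowWord T.attrs r)).hasCommon := by
  rcases (T.applyWord (rowWord T.attrs r)).rows.eq_empty_or_nonempty with h | ⟨r₀, hr₀⟩
  · exact ⟨0, fun r' hr' => by simp [h] at hr'⟩
  · obtain ⟨d, hd⟩ := (T.applyWord _).dec_nonempty r₀ hr₀
    refine ⟨d, fun r' hr' => ?_⟩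
    simp only [applyWord, Finset.mem_filter, rowSat_rowWord_iff] at hr₀ hr'
    obtain rfl : r₀ = r' := T.eq_of_mem_rows_of_eqOn_attrs hr₀.1 hr'.1 fun i hi => by
      rw [hr₀.2 i hi, hr'.2 i hi]
    exact hd

end Table

open Table

section

variable {k : ℕ}

lemma MpsiAt_spec (ψ : PBCM) (T : Table k) (r : ℕ → ℕ) :
    ∃ s ⊆ T.attrs, (T.applyWord (rowWord s r)).hasCommon ∧ ψ.onSet s = MpsiAt ψ T r := by
  have hne :
      {p | ∃ s ⊆ T.attrs, (T.applyWord (rowWord s r)).hasCommon ∧ ψ.onSet s = p}.Nonempty :=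
    ⟨_, T.attrs, subset_rfl, T.hasCommon_applyWord_rowWord_attrs r, rfl⟩
  exact Nat.sInf_mem hne

lemma MpsiAt_le_treeComp (ψ : PBCM) {T : Table k} {Γ : KTree k} (hΓ : isNDT T Γ)
    {r : ℕ → ℕ} (hr : r ∈ T.rows) : MpsiAt ψ T r ≤ treeComp ψ Γ := by
  obtain ⟨-, -, hattrs, hcover, hdec⟩ := hΓ
  obtain ⟨p, hp, hrp⟩ := hcover r hr
  set s := (p.1.map Prod.fst).toFinset
  have hs : s ⊆ T.attrs := fun i hi => by
    obtain ⟨q, hq, rfl⟩ := List.mem_map.1 (List.mem_toFinset.1 hi)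
    exact hattrs (KTree.mem_attrs_of_mem_paths hp hq)
  have hsub : (T.applyWord (rowWord s r)).rows ⊆ (T.applyWord p.1).rows := fun r' hr' => by
    simp only [applyWord, Finset.mem_filter, rowSat_rowWord_iff] at hr' ⊢
    refine ⟨hr'.1, fun q hq => ?_⟩
    rw [hr'.2 q.1 (by simpa [s] using ⟨q.2, hq⟩), hrp q hq]
  have hcommon : (T.applyWord (rowWord s r)).hasCommon := by
    refine ⟨p.2, fun r' hr' => ?_⟩
    rcases hdec p hp with hempty | hp2
    · have hr_mem : r ∈ (T.applyWord p.1).rows := Finset.mem_filter.2 ⟨hr, hrp⟩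
      simp [hempty] at hr_mem
    · exact hp2 r' (hsub hr')
  calc MpsiAt ψ T r ≤ ψ.onSet s := Nat.sInf_le ⟨s, hs, hcommon, rfl⟩
    _ ≤ ψ.onWord p.1 := ψ.onSet_toFinset_le _
    _ ≤ treeComp ψ Γ := KTree.onWord_le_treeComp ψ hp

lemma isNDT_ofChains {T : Table k} (hT : T.rows.Nonempty) {L : List (List (ℕ × ℕ) × ℕ)}
    (hL : L ≠ []) (hok : ∀ p ∈ L, T.wordOk p.1)
    (hcover : ∀ r ∈ T.rows, ∃ p ∈ L, rowSat r p.1)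
    (hdec : ∀ p ∈ L, ∀ r ∈ (T.applyWord p.1).rows, p.2 ∈ T.dec r) :
    isNDT T (KTree.ofChains L) := by
  refine ⟨hT, fun i => ?_, ?_, ?_, ?_⟩
  · obtain ⟨p, hp, hi⟩ := KTree.exists_mem_sub_ofChains_eq hL i
    rw [hi]
    exact DTree.wf_chain (fun q hq => (hok p hp q hq).2) _
  · intro a ha
    obtain ⟨i, -, ha⟩ := Finset.mem_biUnion.1 ha
    obtain ⟨p, hp, hi⟩ := KTree.exists_mem_sub_ofChains_eq hL i
    rw [hi, DTree.attrs_chain, List.mem_toFinset] at ha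
    obtain ⟨q, hq, rfl⟩ := List.mem_map.1 ha
    exact (hok p hp q hq).1
  · rw [KTree.paths_ofChains hL]
    exact hcover
  · rw [KTree.paths_ofChains hL]
    exact fun p hp => Or.inr (hdec p hp)

lemma exists_isNDT_treeComp_le (ψ : PBCM) {T : Table k} (hT : T.rows.Nonempty) :
    ∃ Γ : KTree k, isNDT T Γ ∧
      treeComp ψ Γ ≤ sSup {c | ∃ r ∈ T.rows, MpsiAt ψ T r = c} := by
  choose s hs hcommon hval using MpsiAt_spec ψ T
  choose d hd using hcommon
  set L := T.rows.toList.map fun r => (rowWord (s r) r, d r)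
  have hL : L ≠ [] := by simpa [L, Finset.nonempty_iff_ne_empty] using hT
  have hmemL : ∀ p ∈ L, ∃ r ∈ T.rows, p = (rowWord (s r) r, d r) := by
    simp [L, eq_comm]
  refine ⟨KTree.ofChains L, isNDT_ofChains hT hL ?_ ?_ ?_, ?_⟩
  · intro p hp q hq
    obtain ⟨r, hr, rfl⟩ := hmemL p hp
    obtain ⟨i, hi, rfl⟩ := List.mem_map.1 hq
    have hi := hs r ((Finset.mem_sort _).1 hi)
    exact ⟨hi, (T.rows_mem r hr).1 _ hi⟩
  · intro r hr
    exact ⟨_, List.mem_map_of_mem (Finset.mem_toList.2 hr),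
      rowSat_rowWord_iff.2 fun _ _ => rfl⟩
  · intro p hp
    obtain ⟨r, -, rfl⟩ := hmemL p hp
    exact hd r
  · rw [treeComp, KTree.paths_ofChains hL]
    refine csSup_le' ?_
    rintro _ ⟨p, hp, rfl⟩
    obtain ⟨r, hr, rfl⟩ := hmemL p hp
    rw [onWord_rowWord, hval]
    exact le_csSup (T.rows.finite_toSet.image _).bddAbove ⟨r, hr, rfl⟩

theorem psiA_eq_sSup_MpsiAt (ψ : PBCM) (T : Table k) :
    psiA ψ T = sSup {c | ∃ r ∈ T.rows, MpsiAt ψ T r = c} := by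
  rcases T.rows.eq_empty_or_nonempty with hT | hT
  · simp [psiA, isNDT, hT]
  obtain ⟨Γ, hΓ, hle⟩ := exists_isNDT_treeComp_le ψ hT
  have hΓmem : treeComp ψ Γ ∈ {c | ∃ Γ : KTree k, isNDT T Γ ∧ treeComp ψ Γ = c} :=
    ⟨Γ, hΓ, rfl⟩
  obtain ⟨Γ₀, hΓ₀, hΓ₀ψ⟩ := Nat.sInf_mem ⟨_, hΓmem⟩
  refine le_antisymm ((Nat.sInf_le hΓmem).trans hle) (csSup_le' ?_)
  rintro _ ⟨r, hr, rfl⟩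
  exact (MpsiAt_le_treeComp ψ hΓ₀ hr).trans_eq hΓ₀ψ

end

theorem stmt9_general {k : ℕ} (ψ : BCM) (T : Table k) :
    psiA ψ.toPBCM T = sSup {c | ∃ r ∈ T.rows, MpsiAt ψ.toPBCM T r = c} :=
  psiA_eq_sSup_MpsiAt ψ.toPBCM T

/-- **Lemma (7M3).** For a bounded complexity measure `ψ` and `T ∈ M_k^∞ ∖ M_k^{∞c}`,
`ψ^a(T) = max{M_ψ(T,δ̄) : δ̄ ∈ Δ(T)}`. -/
theorem stmt9 {k : ℕ} (hk : 2 ≤ k) (ψ : BCM) (T : Table k) (hc : ¬ T.hasCommon) :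
    psiA ψ.toPBCM T = sSup {c | ∃ r ∈ T.rows, MpsiAt ψ.toPBCM T r = c} :=
  stmt9_general ψ T
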